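/- In dimension 3, the Clifford homomorphisms satisfy the algebraic Weitzenböck relation: ((2j+3)/(4(j+1)))π⁻_{j+1}(e_k)π⁺_j(e_l) + (1/((2j+3)(2j+1)))π_j(e_k)π_j(e_l) + ((2j+1)/(4(j+1)))π⁺_{j-1}(e_k)π⁻_j(e_l) = -δ_{kl}·Id as maps W_j → W_j, for all k, l ∈ {1,2,3}. -/
import Mathlib

set_option maxHeartbeats 1000000

/-- The Levi-Civita symbol on `Fin 3`. -/
def epsLC (i j k : Fin 3) : ℤ :=
  ((j.val : ℤ) - i.val) * ((k.val : ℤ) - j.val) * ((k.val : ℤ) - i.val) / 2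

/-- `φ ⊗ e_k ∈ W ⊗ ℂ³`, with `W ⊗ ℂ³` modelled as `PiLp 2 (Fin 3 → W)`. -/
noncomputable def tensE (W : Type*) [NormedAddCommGroup W] [InnerProductSpace ℂ W]
    (k : Fin 3) : W →ₗ[ℂ] PiLp 2 fun _ : Fin 3 => W :=
  (WithLp.linearEquiv 2 ℂ (∀ _ : Fin 3, W)).symm.toLinearMap ∘ₗ
    LinearMap.single ℂ (fun _ : Fin 3 => W) k

/-- Auxiliary: the `i`-th coordinate projection. -/
noncomputable def prjW (W : Type*) [NormedAddCommGroup W] [InnerProductSpace ℂ W]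
    (i : Fin 3) : (PiLp 2 fun _ : Fin 3 => W) →ₗ[ℂ] W :=
  (LinearMap.proj i) ∘ₗ (WithLp.linearEquiv 2 ℂ (∀ _ : Fin 3, W)).toLinearMap

section Aux

variable {W : Type*} [NormedAddCommGroup W] [InnerProductSpace ℂ W] [FiniteDimensional ℂ W]

lemma prjW_tensE (i k : Fin 3) (φ : W) :
    prjW W i (tensE W k φ) = if i = k then φ else 0 := by
  simp [prjW, tensE, Pi.single_apply]

lemma adjoint_tensE (k : Fin 3) : LinearMap.adjoint (tensE W k) = prjW W k := by
  refine ((LinearMap.eq_adjoint_iff (prjW W k) (tensE W k)).mpr ?_).symm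
  intro x y
  simp [prjW, tensE, PiLp.inner_apply, Pi.single_apply, apply_ite (inner (𝕜 := ℂ) _)]

lemma DDadj (D : W →ₗ[ℂ] W) (N : ℂ) (hN : N ≠ 0)
    (h : LinearMap.adjoint D ∘ₗ D = N • LinearMap.id) :
    D ∘ₗ LinearMap.adjoint D = N • LinearMap.id := by
  have happ : ∀ x : W, LinearMap.adjoint D (D x) = N • x := by
    intro x
    simpa using LinearMap.congr_fun h x
  have hinj : Function.Injective D := by
    intro x y hxy
    have : N • x = N • y := by rw [← happ x, ← happ y, hxy]
    exact smul_right_injective W hN this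
  have hsurj := LinearMap.injective_iff_surjective.mp hinj
  ext w
  obtain ⟨v, rfl⟩ := hsurj w
  simp only [LinearMap.comp_apply, LinearMap.smul_apply, LinearMap.id_apply]
  rw [happ v, map_smul]

lemma smul_cancel_zero {V V' : Type*} [AddCommGroup V] [Module ℂ V]
    [AddCommGroup V'] [Module ℂ V'] (L : V →ₗ[ℂ] V') (a b : ℂ)
    (h : a • L = b • L) (hab : a ≠ b) : L = 0 := by
  have h2 : (a - b) • L = 0 := by rw [sub_smul, h, sub_self]
  rcases smul_eq_zero.mp h2 with h3 | h3
  · exact absurd (sub_eq_zero.mp h3) hab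
  · exact h3

end Aux

theorem algebraic_weitzenbock_first (j : ℕ)
    (W Wm Wp : Type*)
    [NormedAddCommGroup W] [InnerProductSpace ℂ W] [FiniteDimensional ℂ W]
    [NormedAddCommGroup Wm] [InnerProductSpace ℂ Wm] [FiniteDimensional ℂ Wm]
    [NormedAddCommGroup Wp] [InnerProductSpace ℂ Wp] [FiniteDimensional ℂ Wp]
    (hdW : Module.finrank ℂ W = 2 * j + 2)
    (hdm : Module.finrank ℂ Wm = 2 * j)
    (hdp : Module.finrank ℂ Wp = 2 * j + 4)
    (A : Fin 3 → W →ₗ[ℂ] W) (Am : Fin 3 → Wm →ₗ[ℂ] Wm) (Ap : Fin 3 → Wp →ₗ[ℂ] Wp)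
    (hAskew : ∀ k, LinearMap.adjoint (A k) = -A k)
    (hAmskew : ∀ k, LinearMap.adjoint (Am k) = -Am k)
    (hApskew : ∀ k, LinearMap.adjoint (Ap k) = -Ap k)
    (hAbr : ∀ k l, A k ∘ₗ A l - A l ∘ₗ A k = ∑ m, ((2 * epsLC k l m : ℤ) : ℂ) • A m)
    (hAmbr : ∀ k l, Am k ∘ₗ Am l - Am l ∘ₗ Am k = ∑ m, ((2 * epsLC k l m : ℤ) : ℂ) • Am m)
    (hApbr : ∀ k l, Ap k ∘ₗ Ap l - Ap l ∘ₗ Ap k = ∑ m, ((2 * epsLC k l m : ℤ) : ℂ) • Ap m)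
    (hcasW : ∑ i, A i ∘ₗ A i = (-((2 * (j : ℂ) + 1) * (2 * (j : ℂ) + 3))) • LinearMap.id)
    (hcasm : ∑ i, Am i ∘ₗ Am i = (-((2 * (j : ℂ) - 1) * (2 * (j : ℂ) + 1))) • LinearMap.id)
    (hcasp : ∑ i, Ap i ∘ₗ Ap i = (-((2 * (j : ℂ) + 3) * (2 * (j : ℂ) + 5))) • LinearMap.id)
    (hirr : ∀ q : Submodule ℂ W, (∀ i, q.map (A i) ≤ q) → q = ⊥ ∨ q = ⊤)
    (ρT : Fin 3 → (PiLp 2 fun _ : Fin 3 => W) →ₗ[ℂ] (PiLp 2 fun _ : Fin 3 => W))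
    (hρT : ∀ k f i, (WithLp.equiv 2 (∀ _ : Fin 3, W)) (ρT k f) i
      = A k ((WithLp.equiv 2 (∀ _ : Fin 3, W)) f i)
        + ∑ m, ((2 * epsLC k m i : ℤ) : ℂ) • (WithLp.equiv 2 (∀ _ : Fin 3, W)) f m)
    (ι0 : W →ₗ[ℂ] PiLp 2 fun _ : Fin 3 => W)
    (ιm : Wm →ₗ[ℂ] PiLp 2 fun _ : Fin 3 => W)
    (ιp : Wp →ₗ[ℂ] PiLp 2 fun _ : Fin 3 => W)
    (h0iso : LinearMap.adjoint ι0 ∘ₗ ι0 = LinearMap.id)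
    (hmiso : LinearMap.adjoint ιm ∘ₗ ιm = LinearMap.id)
    (hpiso : LinearMap.adjoint ιp ∘ₗ ιp = LinearMap.id)
    (hcomplete : ι0 ∘ₗ LinearMap.adjoint ι0 + ιm ∘ₗ LinearMap.adjoint ιm
      + ιp ∘ₗ LinearMap.adjoint ιp = LinearMap.id)
    (h0equiv : ∀ k, ι0 ∘ₗ A k = ρT k ∘ₗ ι0)
    (hmequiv : ∀ k, ιm ∘ₗ Am k = ρT k ∘ₗ ιm)
    (hpequiv : ∀ k, ιp ∘ₗ Ap k = ρT k ∘ₗ ιp) :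
    ∀ k l,
      ((2 * (j : ℂ) + 3) / (4 * ((j : ℂ) + 1))) •
        ((-(LinearMap.adjoint
            (((Real.sqrt (4 * ((j : ℝ) + 1) / (2 * (j : ℝ) + 3)) : ℝ) : ℂ) •
              (LinearMap.adjoint ιp ∘ₗ tensE W k)))) ∘ₗ
          (((Real.sqrt (4 * ((j : ℝ) + 1) / (2 * (j : ℝ) + 3)) : ℝ) : ℂ) •
            (LinearMap.adjoint ιp ∘ₗ tensE W l)))
      + (1 / ((2 * (j : ℂ) + 3) * (2 * (j : ℂ) + 1))) • (A k ∘ₗ A l)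
      + ((2 * (j : ℂ) + 1) / (4 * ((j : ℂ) + 1))) •
        ((-(LinearMap.adjoint
            (((Real.sqrt (4 * ((j : ℝ) + 1) / (2 * (j : ℝ) + 1)) : ℝ) : ℂ) •
              (LinearMap.adjoint ιm ∘ₗ tensE W k)))) ∘ₗ
          (((Real.sqrt (4 * ((j : ℝ) + 1) / (2 * (j : ℝ) + 1)) : ℝ) : ℂ) •
            (LinearMap.adjoint ιm ∘ₗ tensE W l)))
      = (-(if k = l then (1 : ℂ) else 0)) • LinearMap.id := by
  intro k l
  classical
  -- scalar facts
  have hj1 : (2 * (j : ℂ) + 1) ≠ 0 := by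
    have h := Nat.cast_ne_zero (R := ℂ).mpr (show 2 * j + 1 ≠ 0 by omega)
    intro hc; apply h; push_cast; linear_combination hc
  have hj3 : (2 * (j : ℂ) + 3) ≠ 0 := by
    have h := Nat.cast_ne_zero (R := ℂ).mpr (show 2 * j + 3 ≠ 0 by omega)
    intro hc; apply h; push_cast; linear_combination hc
  have hj4 : (4 * ((j : ℂ) + 1)) ≠ 0 := by
    have h := Nat.cast_ne_zero (R := ℂ).mpr (show 4 * (j + 1) ≠ 0 by omega)
    intro hc; apply h; push_cast; linear_combination hc
  set N : ℂ := (2 * (j : ℂ) + 1) * (2 * (j : ℂ) + 3) with hNdef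
  have hNne : N ≠ 0 := mul_ne_zero hj1 hj3
  -- the maps J and K
  set Jm : W →ₗ[ℂ] PiLp 2 fun _ : Fin 3 => W := ∑ i, tensE W i ∘ₗ A i with hJmdef
  set Km : (PiLp 2 fun _ : Fin 3 => W) →ₗ[ℂ] W := ∑ i, (-(A i)) ∘ₗ prjW W i with hKmdef
  have hJapp : ∀ (φ : W) (i : Fin 3), prjW W i (Jm φ) = A i φ := by
    intro φ i
    simp [hJmdef, LinearMap.sum_apply, map_sum, prjW_tensE]
  have hKapp : ∀ f, Km f = ∑ i, -(A i ((WithLp.equiv 2 (∀ _ : Fin 3, W)) f i)) := by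
    intro f
    simp [hKmdef, prjW]
  have hadjJ : LinearMap.adjoint Jm = Km := by
    rw [hJmdef, hKmdef, map_sum]
    refine Finset.sum_congr rfl fun i _ => ?_
    rw [LinearMap.adjoint_comp, adjoint_tensE, hAskew]
  have hKJ : Km ∘ₗ Jm = N • LinearMap.id := by
    ext φ
    have hc := LinearMap.congr_fun hcasW φ
    simp only [LinearMap.sum_apply, LinearMap.comp_apply, LinearMap.smul_apply,
      LinearMap.id_apply] at hc ⊢
    rw [hKapp]
    have : ∀ i : Fin 3, (WithLp.equiv 2 (∀ _ : Fin 3, W)) (Jm φ) i = A i φ := fun i => hJapp φ i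
    simp only [this]
    rw [Finset.sum_neg_distrib, hc, neg_smul, neg_neg]
  -- intertwining of K with ρT
  have hKρ : ∀ c, Km ∘ₗ ρT c = A c ∘ₗ Km := by
    intro c
    ext f
    have hbr : ∀ (i : Fin 3) (x : W),
        A c (A i x) - A i (A c x) = ∑ m, ((2 * epsLC c i m : ℤ) : ℂ) • A m x := by
      intro i x
      simpa using LinearMap.congr_fun (hAbr c i) x
    simp only [LinearMap.comp_apply]
    rw [hKapp, hKapp]
    simp only [hρT c f]
    set F : Fin 3 → W := fun i => (WithLp.equiv 2 (∀ _ : Fin 3, W)) f i with hF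
    have h0 := hbr 0 (F 0)
    have h1 := hbr 1 (F 1)
    have h2 := hbr 2 (F 2)
    simp only [Fin.sum_univ_three] at h0 h1 h2 ⊢
    simp only [map_add, map_sum, map_smul, map_neg, Fin.sum_univ_three]
    linear_combination (norm := module) h0 + h1 + h2
  -- Km kills the images of ιm and ιp
  have hKιm : Km ∘ₗ ιm = 0 := by
    have hcomm : ∀ c, (Km ∘ₗ ιm) ∘ₗ Am c = A c ∘ₗ (Km ∘ₗ ιm) := by
      intro c
      calc (Km ∘ₗ ιm) ∘ₗ Am c = Km ∘ₗ (ιm ∘ₗ Am c) := by rw [LinearMap.comp_assoc]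
        _ = Km ∘ₗ (ρT c ∘ₗ ιm) := by rw [hmequiv]
        _ = (Km ∘ₗ ρT c) ∘ₗ ιm := by rw [LinearMap.comp_assoc]
        _ = (A c ∘ₗ Km) ∘ₗ ιm := by rw [hKρ]
        _ = A c ∘ₗ (Km ∘ₗ ιm) := by rw [LinearMap.comp_assoc]
    have hcommx : ∀ (c : Fin 3) (x : Wm), Km (ιm (Am c x)) = A c (Km (ιm x)) := by
      intro c x
      simpa using LinearMap.congr_fun (hcomm c) x
    have hcas : (Km ∘ₗ ιm) ∘ₗ (∑ i, Am i ∘ₗ Am i) = (∑ i, A i ∘ₗ A i) ∘ₗ (Km ∘ₗ ιm) := by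
      ext x
      simp only [LinearMap.comp_apply, LinearMap.sum_apply, map_sum]
      exact Finset.sum_congr rfl fun i _ => by rw [hcommx, hcommx]
    rw [hcasm, hcasW] at hcas
    rw [LinearMap.comp_smul, LinearMap.smul_comp, LinearMap.comp_id, LinearMap.id_comp] at hcas
    refine smul_cancel_zero (Km ∘ₗ ιm) _ _ hcas ?_
    intro hc
    apply hj1
    have h4 : (2 * (j : ℂ) + 1) * 4 = 0 := by linear_combination hc
    linear_combination h4 / 4
  have hKιp : Km ∘ₗ ιp = 0 := by
    have hcomm : ∀ c, (Km ∘ₗ ιp) ∘ₗ Ap c = A c ∘ₗ (Km ∘ₗ ιp) := by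
      intro c
      calc (Km ∘ₗ ιp) ∘ₗ Ap c = Km ∘ₗ (ιp ∘ₗ Ap c) := by rw [LinearMap.comp_assoc]
        _ = Km ∘ₗ (ρT c ∘ₗ ιp) := by rw [hpequiv]
        _ = (Km ∘ₗ ρT c) ∘ₗ ιp := by rw [LinearMap.comp_assoc]
        _ = (A c ∘ₗ Km) ∘ₗ ιp := by rw [hKρ]
        _ = A c ∘ₗ (Km ∘ₗ ιp) := by rw [LinearMap.comp_assoc]
    have hcommx : ∀ (c : Fin 3) (x : Wp), Km (ιp (Ap c x)) = A c (Km (ιp x)) := by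
      intro c x
      simpa using LinearMap.congr_fun (hcomm c) x
    have hcas : (Km ∘ₗ ιp) ∘ₗ (∑ i, Ap i ∘ₗ Ap i) = (∑ i, A i ∘ₗ A i) ∘ₗ (Km ∘ₗ ιp) := by
      ext x
      simp only [LinearMap.comp_apply, LinearMap.sum_apply, map_sum]
      exact Finset.sum_congr rfl fun i _ => by rw [hcommx, hcommx]
    rw [hcasp, hcasW] at hcas
    rw [LinearMap.comp_smul, LinearMap.smul_comp, LinearMap.comp_id, LinearMap.id_comp] at hcas
    refine smul_cancel_zero (Km ∘ₗ ιp) _ _ hcas ?_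
    intro hc
    apply hj3
    have h4 : (2 * (j : ℂ) + 3) * 4 = 0 := by linear_combination - hc
    linear_combination h4 / 4
  -- adjoint versions
  have hιmJ : LinearMap.adjoint ιm ∘ₗ Jm = 0 := by
    have h1 : LinearMap.adjoint ιm ∘ₗ Jm = LinearMap.adjoint (Km ∘ₗ ιm) := by
      rw [LinearMap.adjoint_comp, ← hadjJ, LinearMap.adjoint_adjoint]
    rw [h1, hKιm, map_zero]
  have hιpJ : LinearMap.adjoint ιp ∘ₗ Jm = 0 := by
    have h1 : LinearMap.adjoint ιp ∘ₗ Jm = LinearMap.adjoint (Km ∘ₗ ιp) := by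
      rw [LinearMap.adjoint_comp, ← hadjJ, LinearMap.adjoint_adjoint]
    rw [h1, hKιp, map_zero]
  -- J factors through ι0
  have hJdecomp : Jm = ι0 ∘ₗ (LinearMap.adjoint ι0 ∘ₗ Jm) := by
    conv_lhs => rw [← LinearMap.id_comp Jm, ← hcomplete]
    rw [LinearMap.add_comp, LinearMap.add_comp, LinearMap.comp_assoc, LinearMap.comp_assoc,
      LinearMap.comp_assoc, hιmJ, hιpJ, LinearMap.comp_zero, LinearMap.comp_zero, add_zero,
      add_zero]
  set D : W →ₗ[ℂ] W := LinearMap.adjoint ι0 ∘ₗ Jm with hDdef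
  have hDD : LinearMap.adjoint D ∘ₗ D = N • LinearMap.id := by
    rw [hDdef, LinearMap.adjoint_comp, LinearMap.adjoint_adjoint]
    calc (LinearMap.adjoint Jm ∘ₗ ι0) ∘ₗ (LinearMap.adjoint ι0 ∘ₗ Jm)
        = LinearMap.adjoint Jm ∘ₗ (ι0 ∘ₗ (LinearMap.adjoint ι0 ∘ₗ Jm)) := by
          rw [LinearMap.comp_assoc]
      _ = LinearMap.adjoint Jm ∘ₗ Jm := by rw [← hJdecomp]
      _ = N • LinearMap.id := by rw [hadjJ]; exact hKJ
  have hDDadj : D ∘ₗ LinearMap.adjoint D = N • LinearMap.id := DDadj D N hNne hDD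
  have hNconj : (starRingEnd ℂ) N = N := by
    rw [hNdef]; simp [map_ofNat]
  have hι0 : ι0 = N⁻¹ • (Jm ∘ₗ LinearMap.adjoint D) := by
    have h1 : Jm ∘ₗ LinearMap.adjoint D = ι0 ∘ₗ (D ∘ₗ LinearMap.adjoint D) := by
      conv_lhs => rw [hJdecomp]
      rw [LinearMap.comp_assoc]
    rw [h1, hDDadj, LinearMap.comp_smul, LinearMap.comp_id, smul_smul,
      inv_mul_cancel₀ hNne, one_smul]
  have hproj : ι0 ∘ₗ LinearMap.adjoint ι0 = N⁻¹ • (Jm ∘ₗ Km) := by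
    have hadj0 : LinearMap.adjoint ι0 = N⁻¹ • (D ∘ₗ Km) := by
      rw [hι0, map_smulₛₗ, LinearMap.adjoint_comp, LinearMap.adjoint_adjoint,
        hadjJ, map_inv₀, hNconj]
    rw [hadj0, hι0, LinearMap.smul_comp, LinearMap.comp_smul, smul_smul]
    have h2 : (Jm ∘ₗ LinearMap.adjoint D) ∘ₗ (D ∘ₗ Km)
        = Jm ∘ₗ ((LinearMap.adjoint D ∘ₗ D) ∘ₗ Km) := by
      simp only [LinearMap.comp_assoc]
    rw [h2, hDD, LinearMap.smul_comp, LinearMap.id_comp, LinearMap.comp_smul, smul_smul]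
    rw [show N⁻¹ * N⁻¹ * N = N⁻¹ by field_simp]
  -- sandwich identities
  have hprjJ : prjW W k ∘ₗ Jm = A k := by
    ext φ; exact hJapp φ k
  have hKT : Km ∘ₗ tensE W l = -(A l) := by
    ext φ
    simp only [LinearMap.comp_apply, LinearMap.neg_apply]
    rw [hKmdef]
    simp [prjW_tensE, apply_ite]
  have hmid : prjW W k ∘ₗ ((ι0 ∘ₗ LinearMap.adjoint ι0) ∘ₗ tensE W l)
      = (-(N⁻¹)) • (A k ∘ₗ A l) := by
    rw [hproj, LinearMap.smul_comp, LinearMap.comp_smul]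
    have h3 : prjW W k ∘ₗ ((Jm ∘ₗ Km) ∘ₗ tensE W l)
        = (prjW W k ∘ₗ Jm) ∘ₗ (Km ∘ₗ tensE W l) := by
      simp only [LinearMap.comp_assoc]
    rw [h3, hprjJ, hKT, LinearMap.comp_neg, smul_neg, neg_smul]
  have hdelta : prjW W k ∘ₗ tensE W l = (if k = l then (1 : ℂ) else 0) • LinearMap.id := by
    ext φ
    simp only [LinearMap.comp_apply, LinearMap.smul_apply, LinearMap.id_apply, prjW_tensE]
    split <;> simp
  -- splitting of the identity
  have hsplit : prjW W k ∘ₗ ((ιp ∘ₗ LinearMap.adjoint ιp) ∘ₗ tensE W l)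
      + prjW W k ∘ₗ ((ιm ∘ₗ LinearMap.adjoint ιm) ∘ₗ tensE W l)
      + prjW W k ∘ₗ ((ι0 ∘ₗ LinearMap.adjoint ι0) ∘ₗ tensE W l)
      = prjW W k ∘ₗ tensE W l := by
    ext φ
    have hx := LinearMap.congr_fun hcomplete (tensE W l φ)
    simp only [LinearMap.add_apply, LinearMap.comp_apply, LinearMap.id_apply] at hx ⊢
    rw [← map_add, ← map_add]
    congr 1
    linear_combination (norm := module) hx
  -- the squares of the normalization constants
  have hsp2 : (((Real.sqrt (4 * ((j : ℝ) + 1) / (2 * (j : ℝ) + 3)) : ℝ) : ℂ))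
      * (((Real.sqrt (4 * ((j : ℝ) + 1) / (2 * (j : ℝ) + 3)) : ℝ) : ℂ))
      = 4 * ((j : ℂ) + 1) / (2 * (j : ℂ) + 3) := by
    rw [← Complex.ofReal_mul, Real.mul_self_sqrt (by positivity)]
    push_cast
    ring
  have hsm2 : (((Real.sqrt (4 * ((j : ℝ) + 1) / (2 * (j : ℝ) + 1)) : ℝ) : ℂ))
      * (((Real.sqrt (4 * ((j : ℝ) + 1) / (2 * (j : ℝ) + 1)) : ℝ) : ℂ))
      = 4 * ((j : ℂ) + 1) / (2 * (j : ℂ) + 1) := by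
    rw [← Complex.ofReal_mul, Real.mul_self_sqrt (by positivity)]
    push_cast
    ring
  -- simplify the two outer terms
  have hadj_p : LinearMap.adjoint
      ((((Real.sqrt (4 * ((j : ℝ) + 1) / (2 * (j : ℝ) + 3)) : ℝ) : ℂ))
        • (LinearMap.adjoint ιp ∘ₗ tensE W k))
      = (((Real.sqrt (4 * ((j : ℝ) + 1) / (2 * (j : ℝ) + 3)) : ℝ) : ℂ))
        • (prjW W k ∘ₗ ιp) := by
    rw [map_smulₛₗ, Complex.conj_ofReal, LinearMap.adjoint_comp, adjoint_tensE,
      LinearMap.adjoint_adjoint]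
  have hadj_m : LinearMap.adjoint
      ((((Real.sqrt (4 * ((j : ℝ) + 1) / (2 * (j : ℝ) + 1)) : ℝ) : ℂ))
        • (LinearMap.adjoint ιm ∘ₗ tensE W k))
      = (((Real.sqrt (4 * ((j : ℝ) + 1) / (2 * (j : ℝ) + 1)) : ℝ) : ℂ))
        • (prjW W k ∘ₗ ιm) := by
    rw [map_smulₛₗ, Complex.conj_ofReal, LinearMap.adjoint_comp, adjoint_tensE,
      LinearMap.adjoint_adjoint]
  have hassoc_p : (prjW W k ∘ₗ ιp) ∘ₗ (LinearMap.adjoint ιp ∘ₗ tensE W l)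
      = prjW W k ∘ₗ ((ιp ∘ₗ LinearMap.adjoint ιp) ∘ₗ tensE W l) := by
    simp only [LinearMap.comp_assoc]
  have hassoc_m : (prjW W k ∘ₗ ιm) ∘ₗ (LinearMap.adjoint ιm ∘ₗ tensE W l)
      = prjW W k ∘ₗ ((ιm ∘ₗ LinearMap.adjoint ιm) ∘ₗ tensE W l) := by
    simp only [LinearMap.comp_assoc]
  have hterm1 : ((2 * (j : ℂ) + 3) / (4 * ((j : ℂ) + 1))) •
      ((-(LinearMap.adjoint
          (((Real.sqrt (4 * ((j : ℝ) + 1) / (2 * (j : ℝ) + 3)) : ℝ) : ℂ) •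
            (LinearMap.adjoint ιp ∘ₗ tensE W k)))) ∘ₗ
        (((Real.sqrt (4 * ((j : ℝ) + 1) / (2 * (j : ℝ) + 3)) : ℝ) : ℂ) •
          (LinearMap.adjoint ιp ∘ₗ tensE W l)))
      = -(prjW W k ∘ₗ ((ιp ∘ₗ LinearMap.adjoint ιp) ∘ₗ tensE W l)) := by
    rw [hadj_p, LinearMap.neg_comp, LinearMap.smul_comp, LinearMap.comp_smul, smul_smul,
      smul_neg, smul_smul, hassoc_p]
    rw [show (2 * (j : ℂ) + 3) / (4 * ((j : ℂ) + 1))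
        * ((((Real.sqrt (4 * ((j : ℝ) + 1) / (2 * (j : ℝ) + 3)) : ℝ) : ℂ))
          * (((Real.sqrt (4 * ((j : ℝ) + 1) / (2 * (j : ℝ) + 3)) : ℝ) : ℂ))) = 1 by
      rw [hsp2]; field_simp]
    rw [one_smul]
  have hterm3 : ((2 * (j : ℂ) + 1) / (4 * ((j : ℂ) + 1))) •
      ((-(LinearMap.adjoint
          (((Real.sqrt (4 * ((j : ℝ) + 1) / (2 * (j : ℝ) + 1)) : ℝ) : ℂ) •
            (LinearMap.adjoint ιm ∘ₗ tensE W k)))) ∘ₗ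
        (((Real.sqrt (4 * ((j : ℝ) + 1) / (2 * (j : ℝ) + 1)) : ℝ) : ℂ) •
          (LinearMap.adjoint ιm ∘ₗ tensE W l)))
      = -(prjW W k ∘ₗ ((ιm ∘ₗ LinearMap.adjoint ιm) ∘ₗ tensE W l)) := by
    rw [hadj_m, LinearMap.neg_comp, LinearMap.smul_comp, LinearMap.comp_smul, smul_smul,
      smul_neg, smul_smul, hassoc_m]
    rw [show (2 * (j : ℂ) + 1) / (4 * ((j : ℂ) + 1))
        * ((((Real.sqrt (4 * ((j : ℝ) + 1) / (2 * (j : ℝ) + 1)) : ℝ) : ℂ))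
          * (((Real.sqrt (4 * ((j : ℝ) + 1) / (2 * (j : ℝ) + 1)) : ℝ) : ℂ))) = 1 by
      rw [hsm2]; field_simp]
    rw [one_smul]
  -- final assembly
  rw [hterm1, hterm3]
  rw [hdelta] at hsplit
  rw [hmid] at hsplit
  have hc2 : (1 / ((2 * (j : ℂ) + 3) * (2 * (j : ℂ) + 1))) = N⁻¹ := by
    rw [hNdef, one_div, mul_comm]
  rw [hc2, neg_smul, ← hsplit]
  module
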